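/- arXiv:1302.6071 — 2 statements merged into one kernel-verified Lean document; each statement's English description precedes it below -/
import Mathlib

section
/- Let A : ℤ × ℤ → G be a function into a group G (labelling of an apartment's vertices), and suppose A is (r,s)-periodic and (t,u)-periodic in the sense that A(i,j)⁻¹A(k,l) = A(i+r,j+s)⁻¹A(k+r,l+s) and similarly for (t,u), for all i,j,k,l, where (r,s) and (t,u) are linearly independent over ℚ. Then for every (i,j) ∈ ℤ² there exist m,n ∈ ℤ with mr+nt ≥ 0, ms+nu ≥ 0, i+mr+nt ≥ 0 and j+ms+nu ≥ 0; consequently A(i,j) = A(k,l)·A(k+mr+nt, l+ms+nu)⁻¹·A(i+mr+nt, j+ms+nu) for any k,l ≥ 0, so A is determined on all of ℤ² by its values on ℕ × ℕ. -/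
/-!
The translations `v` with `(A p)⁻¹ * A q = (A (p + v))⁻¹ * A (q + v)` for all `p q` form a
subgroup `L` of `ℤ²`. If `(r, s)` and `(t, u)` lie in `L` and `d = r u - s t ≠ 0`, then
`(u - t) • (r, s) + (r - s) • (t, u) = (d, d)`, so `L` contains diagonal vectors `(c d, c d)`
reaching arbitrarily far into the positive quadrant. Translating by such a period moves any
point `(i, j)` into `ℕ × ℕ`, and the period relation then expresses `A (i, j)` through values
of `A` on `ℕ × ℕ`.
-/

section

variable {M G : Type*} [AddGroup M] [Group G]

def periods (A : M → G) : AddSubgroup M where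
  carrier := {v | ∀ p q, (A p)⁻¹ * A q = (A (p + v))⁻¹ * A (q + v)}
  zero_mem' := by simp
  add_mem' {v w} hv hw p q := by
    rw [hv p q, hw (p + v) (q + v), add_assoc, add_assoc]
  neg_mem' {v} hv p q := by
    simpa using (hv (p + -v) (q + -v)).symm

theorem eq_mul_inv_mul_of_mem_periods {A : M → G} {v : M} (hv : v ∈ periods A) (p q : M) :
    A q = A p * (A (p + v))⁻¹ * A (q + v) := by
  rw [mul_assoc, ← hv p q, mul_inv_cancel_left]

theorem exists_combination_eq_diag (r s t u c : ℤ) :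
    ∃ m n : ℤ, m * r + n * t = c * (r * u - s * t) ∧ m * s + n * u = c * (r * u - s * t) :=
  ⟨c * (u - t), c * (r - s), by ring, by ring⟩

theorem exists_le_mul_of_ne_zero {d : ℤ} (hd : d ≠ 0) {K : ℤ} (hK : 0 ≤ K) :
    ∃ c : ℤ, K ≤ c * d :=
  ⟨K * d, by rw [mul_assoc]; exact le_mul_of_one_le_right hK (mul_self_pos.mpr hd)⟩

end

/-- A doubly periodic labelling of an apartment is determined by its values on a sector:
Case 1 of the rigidity lemma. -/
theorem doubly_periodic_determined_by_sector
    (G : Type) [Group G] (A : ℤ × ℤ → G) (r s t u : ℤ)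
    (hrs : ∀ i j k l : ℤ,
      (A (i, j))⁻¹ * A (k, l) = (A (i + r, j + s))⁻¹ * A (k + r, l + s))
    (htu : ∀ i j k l : ℤ,
      (A (i, j))⁻¹ * A (k, l) = (A (i + t, j + u))⁻¹ * A (k + t, l + u))
    (hindep : r * u - s * t ≠ 0) :
    ∀ i j : ℤ, ∃ m n : ℤ,
      0 ≤ m * r + n * t ∧ 0 ≤ m * s + n * u ∧
      0 ≤ i + (m * r + n * t) ∧ 0 ≤ j + (m * s + n * u) ∧
      ∀ k l : ℤ, 0 ≤ k → 0 ≤ l →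
        A (i, j) = A (k, l) * (A (k + (m * r + n * t), l + (m * s + n * u)))⁻¹ *
          A (i + (m * r + n * t), j + (m * s + n * u)) := by
  intro i j
  obtain ⟨c, hc⟩ := exists_le_mul_of_ne_zero hindep (by positivity : 0 ≤ |i| + |j|)
  obtain ⟨m, n, hx, hy⟩ := exists_combination_eq_diag r s t u c
  have hi := neg_abs_le i
  have hj := neg_abs_le j
  have hi₀ := abs_nonneg i
  have hj₀ := abs_nonneg j
  refine ⟨m, n, by linarith, by linarith, by linarith, by linarith, fun k l _ _ => ?_⟩
  have hrs_mem : ((r, s) : ℤ × ℤ) ∈ periods A := fun p q => hrs p.1 p.2 q.1 q.2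
  have htu_mem : ((t, u) : ℤ × ℤ) ∈ periods A := fun p q => htu p.1 p.2 q.1 q.2
  have hv : m • (r, s) + n • (t, u) ∈ periods A :=
    add_mem (zsmul_mem hrs_mem m) (zsmul_mem htu_mem n)
  have hvec : m • (r, s) + n • (t, u) = (m * r + n * t, m * s + n * u) := by
    ext <;> simp
  rw [hvec] at hv
  exact eq_mul_inv_mul_of_mem_periods hv (k, l) (i, j)
end

section
/- Let A : ℤ × ℤ → G be a labelling that is (r,s)-periodic with r > 0 and s > 0 (i.e., A(i,j)⁻¹A(k,l) = A(i+r,j+s)⁻¹A(k+r,l+s) for all i,j,k,l). Then for every (i,j) ∈ ℤ², choosing m ∈ ℕ with i + mr ≥ 0 and j + ms ≥ 0, one has A(i,j) = A(k,l)·A(k+mr, l+ms)⁻¹·A(i+mr, j+ms) for all k,l ≥ 0; hence A is determined on ℤ² by its restriction to ℕ × ℕ. -/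
theorem inv_mul_eq_inv_mul_add_nsmul {α G : Type*} [AddMonoid α] [Group G] {A : α → G} {v : α}
    (hA : ∀ x y, (A x)⁻¹ * A y = (A (x + v))⁻¹ * A (y + v)) (n : ℕ) (x y : α) :
    (A x)⁻¹ * A y = (A (x + n • v))⁻¹ * A (y + n • v) := by
  induction n with
  | zero => simp
  | succ n ih => rw [ih, hA, succ_nsmul, add_assoc, add_assoc]

theorem singly_periodic_determined_by_sector_general
    (G : Type) [Group G] (A : ℤ × ℤ → G) (r s : ℤ)
    (hrs : ∀ i j k l : ℤ,
      (A (i, j))⁻¹ * A (k, l) = (A (i + r, j + s))⁻¹ * A (k + r, l + s)) :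
    ∀ i j : ℤ, ∀ m : ℕ, 0 ≤ i + (m : ℤ) * r → 0 ≤ j + (m : ℤ) * s →
      ∀ k l : ℤ, 0 ≤ k → 0 ≤ l →
        A (i, j) = A (k, l) * (A (k + (m : ℤ) * r, l + (m : ℤ) * s))⁻¹ *
          A (i + (m : ℤ) * r, j + (m : ℤ) * s) := by
  intro i j m _ _ k l _ _
  have hm := inv_mul_eq_inv_mul_add_nsmul (v := (r, s)) (fun x y => hrs x.1 x.2 y.1 y.2) m
    (k, l) (i, j)
  simp only [Prod.smul_mk, nsmul_eq_mul, Prod.mk_add_mk] at hm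
  rw [mul_assoc, ← hm, mul_inv_cancel_left]

/-- A singly `(r,s)`-periodic labelling with `r, s > 0` is determined by its values on a
sector: Case 2 of the rigidity lemma. -/
theorem singly_periodic_determined_by_sector
    (G : Type) [Group G] (A : ℤ × ℤ → G) (r s : ℤ) (hr : 0 < r) (hs : 0 < s)
    (hrs : ∀ i j k l : ℤ,
      (A (i, j))⁻¹ * A (k, l) = (A (i + r, j + s))⁻¹ * A (k + r, l + s)) :
    ∀ i j : ℤ, ∀ m : ℕ, 0 ≤ i + (m : ℤ) * r → 0 ≤ j + (m : ℤ) * s →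
      ∀ k l : ℤ, 0 ≤ k → 0 ≤ l →
        A (i, j) = A (k, l) * (A (k + (m : ℤ) * r, l + (m : ℤ) * s))⁻¹ *
          A (i + (m : ℤ) * r, j + (m : ℤ) * s) :=
  singly_periodic_determined_by_sector_general G A r s hrs
end
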